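/- Let Ψ : ℝ^d × ℝ^d → ℝ be convex and differentiable, and define I(a₁,a₂) = sup over (λ₁,λ₂) of (λ₁·a₁ + λ₂·a₂ − Ψ(λ₁,λ₂)) (the Legendre–Fenchel transform). Fix λ₀ ∈ ℝ^d and set a₀ = ∇₁Ψ(λ₀,0), a_t = ∇₂Ψ(λ₀,0). Then for every (a₁,a₂) with λ₀·(a₁ − a₀) ≥ 0, I(a₁,a₂) ≥ I(a₀,a_t) = λ₀·a₀ − Ψ(λ₀,0). Hence the infimum of I over the half-space B₀ = {(a₁,a₂) : λ₀·(a₁−a₀) ≥ 0} equals λ₀·a₀ − Ψ(λ₀,0). -/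
import Mathlib

open Set

lemma grad_ineq {E : Type*} [NormedAddCommGroup E] [NormedSpace ℝ E] {Ψ : E → ℝ}
    (hconv : ConvexOn ℝ Set.univ Ψ) (hdiff : Differentiable ℝ Ψ) (x y : E) :
    Ψ x + fderiv ℝ Ψ x (y - x) ≤ Ψ y := by
  set g : ℝ → ℝ := fun t => Ψ (x + t • (y - x)) with hg
  have hgconv : ConvexOn ℝ Set.univ g := by
    refine ⟨convex_univ, fun a _ b _ ta tb hta htb hab => ?_⟩
    have h : x + (ta • a + tb • b) • (y - x)
        = ta • (x + a • (y - x)) + tb • (x + b • (y - x)) := by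
      match_scalars <;> simp only [smul_eq_mul] <;> linarith
    simp only [hg, h]
    exact hconv.2 (mem_univ _) (mem_univ _) hta htb hab
  have hd : HasDerivAt g (fderiv ℝ Ψ x (y - x)) 0 := by
    have h1 : HasDerivAt (fun t : ℝ => x + t • (y - x)) (y - x) 0 := by
      simpa using ((hasDerivAt_id (0:ℝ)).smul_const (y - x)).const_add x
    have h2 := (hdiff x).hasFDerivAt
    have h3 : HasFDerivAt Ψ (fderiv ℝ Ψ x) (x + (0:ℝ) • (y - x)) := by simpa using h2
    exact h3.comp_hasDerivAt 0 h1
  have := hgconv.le_slope_of_hasDerivAt (mem_univ (0:ℝ)) (mem_univ 1) one_pos hd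
  rw [slope_def_field] at this
  have hg0 : g 0 = Ψ x := by simp [hg]
  have hg1 : g 1 = Ψ y := by simp [hg]
  rw [hg0, hg1] at this
  norm_num at this
  linarith [(fderiv ℝ Ψ x).map_sub y x]

theorem inf_rate_function_over_half_space
    {d : ℕ} (Ψ : ((Fin d → ℝ) × (Fin d → ℝ)) → ℝ)
    (hconv : ConvexOn ℝ Set.univ Ψ) (hdiff : Differentiable ℝ Ψ)
    (I : ((Fin d → ℝ) × (Fin d → ℝ)) → EReal)
    (hI : ∀ a, I a = ⨆ l : (Fin d → ℝ) × (Fin d → ℝ),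
      ((∑ i, l.1 i * a.1 i + ∑ i, l.2 i * a.2 i - Ψ l : ℝ) : EReal))
    (lam0 a0 at_ : Fin d → ℝ)
    (ha0 : ∀ v, fderiv ℝ Ψ (lam0, 0) (v, 0) = ∑ i, v i * a0 i)
    (hat : ∀ v, fderiv ℝ Ψ (lam0, 0) (0, v) = ∑ i, v i * at_ i) :
    (∀ a : (Fin d → ℝ) × (Fin d → ℝ),
        0 ≤ ∑ i, lam0 i * (a.1 i - a0 i) → I (a0, at_) ≤ I a) ∧
    I (a0, at_) = ((∑ i, lam0 i * a0 i - Ψ (lam0, 0) : ℝ) : EReal) ∧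
    (⨅ a ∈ {p : (Fin d → ℝ) × (Fin d → ℝ) | 0 ≤ ∑ i, lam0 i * (p.1 i - a0 i)}, I a)
      = ((∑ i, lam0 i * a0 i - Ψ (lam0, 0) : ℝ) : EReal) := by
  set c : ℝ := ∑ i, lam0 i * a0 i - Ψ (lam0, 0) with hc
  have hD : ∀ p : (Fin d → ℝ) × (Fin d → ℝ),
      fderiv ℝ Ψ (lam0, 0) p = ∑ i, p.1 i * a0 i + ∑ i, p.2 i * at_ i := by
    intro p
    have hp : p = ((p.1, 0) : (Fin d → ℝ) × (Fin d → ℝ)) + (0, p.2) := by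
      ext i <;> simp
    conv_lhs => rw [hp]
    rw [map_add, ha0 p.1, hat p.2]
  have key : ∀ l : (Fin d → ℝ) × (Fin d → ℝ),
      ∑ i, l.1 i * a0 i + ∑ i, l.2 i * at_ i - Ψ l ≤ c := by
    intro l
    have h1 := grad_ineq hconv hdiff (lam0, 0) l
    rw [hD] at h1
    have h2 : (l - ((lam0, 0) : (Fin d → ℝ) × (Fin d → ℝ))).1 = l.1 - lam0 := rfl
    have h3 : (l - ((lam0, 0) : (Fin d → ℝ) × (Fin d → ℝ))).2 = l.2 := by simp
    rw [h2, h3] at h1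
    have h4 : ∑ i, (l.1 - lam0) i * a0 i
        = ∑ i, l.1 i * a0 i - ∑ i, lam0 i * a0 i := by
      simp [sub_mul, Finset.sum_sub_distrib]
    rw [h4] at h1
    simp only [hc]
    linarith
  have hval : I (a0, at_) = (c : EReal) := by
    rw [hI]
    apply le_antisymm
    · exact iSup_le fun l => EReal.coe_le_coe_iff.2 (key l)
    · refine le_iSup_of_le (lam0, 0) ?_
      apply le_of_eq
      norm_cast
      simp [hc]
  have hmono : ∀ a : (Fin d → ℝ) × (Fin d → ℝ),
      0 ≤ ∑ i, lam0 i * (a.1 i - a0 i) → I (a0, at_) ≤ I a := by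
    intro a ha
    rw [hval, hI]
    refine le_iSup_of_le (lam0, 0) ?_
    apply EReal.coe_le_coe_iff.2
    have h5 : ∑ i, lam0 i * (a.1 i - a0 i)
        = ∑ i, lam0 i * a.1 i - ∑ i, lam0 i * a0 i := by
      simp [mul_sub, Finset.sum_sub_distrib]
    simp only [hc]
    simp only [Pi.zero_apply, zero_mul, Finset.sum_const_zero]
    linarith
  refine ⟨hmono, hval, le_antisymm ?_ ?_⟩
  · calc (⨅ a ∈ {p : (Fin d → ℝ) × (Fin d → ℝ) |
          0 ≤ ∑ i, lam0 i * (p.1 i - a0 i)}, I a) ≤ I (a0, at_) :=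
            iInf₂_le (a0, at_) (by simp [Set.mem_setOf_eq])
      _ = (c : EReal) := hval
  · exact le_iInf₂ fun a ha => hval ▸ hmono a ha
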